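/- Fix a positive integer n. The sum over all partitions λ of n into distinct parts, and over all odd numbers x, of max(0, c_x(λ) − 1), where c_x(λ) is the number of parts of λ of the form x·2^j, equals the number of partitions of n in which exactly one part appears three times and all other parts appear once. -/

import Mathlib

/-!
For a partition into distinct parts, `c_x - 1` counts the parts `z` of the chain
`{x, 2x, 4x, …}` that are not the largest one present, i.e. those for which some `z * 2 ^ d`
with `d > 0` is again a part. So the left side counts pairs `(λ, z)` of this kind. Taking the
least such `d` and splitting the part `z * 2 ^ d` into `z, z, 2z, …, 2 ^ (d - 1) z` gives a
partition in which `z` occurs three times and every other part once. Conversely, if `z` occurs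
three times, the least `d > 0` for which `z * 2 ^ d` is not a part tells which parts to merge
back into `z * 2 ^ d`.
-/

open Finset

theorem Finset.card_filter_exists_lt {α : Type*} [LinearOrder α] (s : Finset α)
    [DecidablePred fun a => ∃ b ∈ s, a < b] :
    #(s.filter fun a => ∃ b ∈ s, a < b) = #s - 1 := by
  rcases s.eq_empty_or_nonempty with rfl | hs
  · simp
  rw [← card_erase_of_mem (s.max'_mem hs)]
  congr 1
  ext a
  simp only [mem_filter, mem_erase]
  constructor
  · rintro ⟨ha, b, hb, hab⟩
    exact ⟨(hab.trans_le (le_max' s b hb)).ne, ha⟩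
  · rintro ⟨hne, ha⟩
    exact ⟨ha, _, s.max'_mem hs, lt_of_le_of_ne (le_max' s a ha) hne⟩

theorem mul_two_pow_injective {z : ℕ} (hz : 0 < z) : Function.Injective (z * 2 ^ · : ℕ → ℕ) :=
  fun _ _ h => Nat.pow_right_injective le_rfl (Nat.eq_of_mul_eq_mul_left hz h)

theorem odd_mul_two_pow_inj {x y i j : ℕ} (hx : Odd x) (hy : Odd y)
    (h : x * 2 ^ i = y * 2 ^ j) : x = y ∧ i = j := by
  have hij : i = j := by
    have := congrArg (padicValNat 2) h
    simpa [padicValNat.mul hx.pos.ne', padicValNat.mul hy.pos.ne',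
      padicValNat.eq_zero_of_not_dvd hx.not_two_dvd_nat,
      padicValNat.eq_zero_of_not_dvd hy.not_two_dvd_nat] using this
  subst hij
  exact ⟨Nat.eq_of_mul_eq_mul_right (by positivity) h, rfl⟩

theorem exists_mul_two_pow_mem_iff {x i : ℕ} (hx : 0 < x) (t : Finset ℕ) :
    (∃ d, 0 < d ∧ x * 2 ^ i * 2 ^ d ∈ t) ↔ ∃ w ∈ t, (∃ j, w = x * 2 ^ j) ∧ x * 2 ^ i < w := by
  constructor
  · rintro ⟨d, hd, hmem⟩
    refine ⟨_, hmem, ⟨i + d, by ring⟩, ?_⟩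
    exact lt_mul_of_one_lt_right (by positivity) (Nat.one_lt_two_pow hd.ne')
  · rintro ⟨_, hmem, ⟨j, rfl⟩, hlt⟩
    have hij : i < j :=
      (Nat.pow_lt_pow_iff_right (by norm_num)).1 (Nat.lt_of_mul_lt_mul_left hlt)
    refine ⟨j - i, Nat.sub_pos_of_lt hij, ?_⟩
    rwa [mul_assoc, ← pow_add, Nat.add_sub_cancel' hij.le]

open Classical in
theorem sum_card_chain_sub_one_eq_card_filter {S t : Finset ℕ} (hS : ∀ x ∈ S, Odd x)
    (ht : ∀ z ∈ t, ∃ x ∈ S, ∃ j, z = x * 2 ^ j) :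
    ∑ x ∈ S, (#(t.filter fun z => ∃ j, z = x * 2 ^ j) - 1) =
      #(t.filter fun z => ∃ d, 0 < d ∧ z * 2 ^ d ∈ t) := by
  set chain : ℕ → Finset ℕ := fun x => t.filter fun z => ∃ j, z = x * 2 ^ j
  have hfiber : ∀ x ∈ S, (chain x).filter (fun z => ∃ w ∈ chain x, z < w) =
      (chain x).filter fun z => ∃ d, 0 < d ∧ z * 2 ^ d ∈ t := by
    intro x hx
    refine filter_congr fun z hz => ?_
    obtain ⟨j, rfl⟩ := (mem_filter.1 hz).2
    simp only [chain, mem_filter, and_assoc]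
    exact (exists_mul_two_pow_mem_iff (hS x hx).pos t).symm
  calc ∑ x ∈ S, (#(chain x) - 1)
      = ∑ x ∈ S, #((chain x).filter fun z => ∃ d, 0 < d ∧ z * 2 ^ d ∈ t) :=
        sum_congr rfl fun x hx => by rw [← hfiber x hx, card_filter_exists_lt]
    _ = #(S.biUnion fun x => (chain x).filter fun z => ∃ d, 0 < d ∧ z * 2 ^ d ∈ t) := by
        refine (card_biUnion fun x hx y hy hxy => ?_).symm
        simp only [Function.onFun, disjoint_left, chain, mem_filter]
        rintro z ⟨⟨-, i, rfl⟩, -⟩ ⟨⟨-, j, hj⟩, -⟩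
        exact hxy (odd_mul_two_pow_inj (hS x hx) (hS y hy) hj).1
    _ = #(t.filter fun z => ∃ d, 0 < d ∧ z * 2 ^ d ∈ t) := by
        congr 1
        ext z
        simp only [mem_biUnion, chain, mem_filter]
        constructor
        · rintro ⟨x, -, ⟨hz, -⟩, hd⟩
          exact ⟨hz, hd⟩
        · rintro ⟨hz, hd⟩
          obtain ⟨x, hx, hchain⟩ := ht z hz
          exact ⟨x, hx, ⟨hz, hchain⟩, hd⟩

open Classical in
theorem Nat.Partition.sum_card_chain_sub_one_eq_card_filter {n : ℕ} (p : n.Partition)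
    (hp : p.parts.Nodup) :
    ∑ x ∈ (range (n + 1)).filter (fun x => Odd x),
        (Multiset.card (p.parts.filter fun y => ∃ j : ℕ, y = x * 2 ^ j) - 1) =
      #(p.parts.toFinset.filter fun z => ∃ d, 0 < d ∧ z * 2 ^ d ∈ p.parts) := by
  have hcard (x : ℕ) : Multiset.card (p.parts.filter fun y => ∃ j : ℕ, y = x * 2 ^ j) =
      #(p.parts.toFinset.filter fun y => ∃ j : ℕ, y = x * 2 ^ j) := by
    rw [← Multiset.toFinset_filter, Multiset.toFinset_card_of_nodup (hp.filter _)]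
  simp only [hcard, ← Multiset.mem_toFinset (s := p.parts)]
  refine _root_.sum_card_chain_sub_one_eq_card_filter (fun x hx => (mem_filter.1 hx).2)
    fun z hz => ?_
  have hz := Multiset.mem_toFinset.1 hz
  obtain ⟨k, m, hm, rfl⟩ := Nat.exists_eq_two_pow_mul_odd (p.parts_pos hz).ne'
  have hmn : m ≤ n := (Nat.le_mul_of_pos_left m (by positivity)).trans (p.le_of_mem_parts hz)
  exact ⟨m, mem_filter.2 ⟨mem_range.2 (Nat.lt_succ_of_le hmn), hm⟩, k, mul_comm _ _⟩

def doublingBlock (z d : ℕ) : Multiset ℕ := z ::ₘ (Multiset.range d).map (z * 2 ^ ·)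

section DoublingBlock

variable {z d : ℕ}

theorem sum_doublingBlock (z d : ℕ) : (doublingBlock z d).sum = z * 2 ^ d := by
  induction d with
  | zero => simp [doublingBlock]
  | succ d ih =>
    simp only [doublingBlock, Multiset.sum_cons, Multiset.range_succ, Multiset.map_cons] at ih ⊢
    rw [add_left_comm, ih, pow_succ]
    ring

theorem mul_two_pow_mem_doublingBlock {i : ℕ} (hi : i < d) : z * 2 ^ i ∈ doublingBlock z d :=
  Multiset.mem_cons_of_mem (Multiset.mem_map_of_mem _ (Multiset.mem_range.2 hi))

theorem exists_of_mem_doublingBlock {u : ℕ} (hd : 0 < d) (hu : u ∈ doublingBlock z d) :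
    ∃ i < d, u = z * 2 ^ i := by
  rcases Multiset.mem_cons.1 hu with rfl | hu
  · exact ⟨0, hd, by simp⟩
  · obtain ⟨i, hi, rfl⟩ := Multiset.mem_map.1 hu
    exact ⟨i, Multiset.mem_range.1 hi, rfl⟩

theorem pos_of_mem_doublingBlock {u : ℕ} (hz : 0 < z) (hu : u ∈ doublingBlock z d) : 0 < u := by
  rcases Multiset.mem_cons.1 hu with rfl | hu
  · exact hz
  · obtain ⟨i, -, rfl⟩ := Multiset.mem_map.1 hu
    positivity

theorem count_doublingBlock_le_one {u : ℕ} (hz : 0 < z) (hu : u ≠ z) :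
    (doublingBlock z d).count u ≤ 1 := by
  rw [doublingBlock, Multiset.count_cons_of_ne hu]
  exact Multiset.nodup_iff_count_le_one.1
    ((Multiset.nodup_range d).map (mul_two_pow_injective hz)) u

theorem count_doublingBlock_self (hz : 0 < z) (hd : 0 < d) :
    (doublingBlock z d).count z = 2 := by
  rw [doublingBlock, Multiset.count_cons_self,
    Multiset.count_eq_one_of_mem ((Multiset.nodup_range d).map (mul_two_pow_injective hz))]
  exact Multiset.mem_map.2 ⟨0, Multiset.mem_range.2 hd, by simp⟩

theorem mul_two_pow_notMem_doublingBlock (hz : 0 < z) (hd : 0 < d) :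
    z * 2 ^ d ∉ doublingBlock z d := fun h => by
  obtain ⟨i, hi, heq⟩ := exists_of_mem_doublingBlock hd h
  exact hi.ne (mul_two_pow_injective hz heq).symm

end DoublingBlock

section Split

variable {s : Multiset ℕ} {z d : ℕ}

theorem count_doublingBlock_add_erase_self (hz0 : 0 < z) (hs : s.Nodup) (hz : z ∈ s)
    (hd : IsLeast {e | 0 < e ∧ z * 2 ^ e ∈ s} d) :
    (doublingBlock z d + s.erase (z * 2 ^ d)).count z = 3 := by
  have hne : z ≠ z * 2 ^ d := fun h =>
    hd.1.1.ne (mul_two_pow_injective hz0 (by simpa using h))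
  rw [Multiset.count_add, count_doublingBlock_self hz0 hd.1.1, Multiset.count_erase_of_ne hne,
    Multiset.count_eq_one_of_mem hs hz]

theorem count_doublingBlock_add_erase_le_one (hz0 : 0 < z) (hs : s.Nodup)
    (hd : IsLeast {e | 0 < e ∧ z * 2 ^ e ∈ s} d) {u : ℕ} (hu : u ≠ z) :
    (doublingBlock z d + s.erase (z * 2 ^ d)).count u ≤ 1 := by
  have herase := Multiset.count_le_of_le u (s.erase_le (z * 2 ^ d))
  rw [Multiset.count_add]
  by_cases hub : u ∈ doublingBlock z d
  · obtain ⟨i, hid, rfl⟩ := exists_of_mem_doublingBlock hd.1.1 hub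
    have hi : 0 < i := Nat.pos_of_ne_zero fun h => hu (by simp [h])
    have hus : z * 2 ^ i ∉ s := fun h => (hd.2 ⟨hi, h⟩).not_gt hid
    have := count_doublingBlock_le_one (d := d) hz0 hu
    rw [Multiset.count_eq_zero.2 hus] at herase
    omega
  · rw [Multiset.count_eq_zero.2 hub, zero_add]
    exact herase.trans (Multiset.nodup_iff_count_le_one.1 hs u)

theorem isLeast_notMem_doublingBlock_add_erase (hz0 : 0 < z) (hs : s.Nodup)
    (hd : IsLeast {e | 0 < e ∧ z * 2 ^ e ∈ s} d) :
    IsLeast {e | 0 < e ∧ z * 2 ^ e ∉ doublingBlock z d + s.erase (z * 2 ^ d)} d := by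
  refine ⟨⟨hd.1.1, fun h => ?_⟩, fun e ⟨he, hmem⟩ => le_of_not_gt fun hed =>
    hmem (Multiset.mem_add.2 (Or.inl (mul_two_pow_mem_doublingBlock hed)))⟩
  rcases Multiset.mem_add.1 h with h | h
  · exact mul_two_pow_notMem_doublingBlock hz0 hd.1.1 h
  · exact (hs.mem_erase_iff.1 h).1 rfl

end Split

section Merge

variable {q : Multiset ℕ} {z d : ℕ}

theorem doublingBlock_le (hz0 : 0 < z) (h3 : q.count z = 3)
    (hd : IsLeast {e | 0 < e ∧ z * 2 ^ e ∉ q} d) : doublingBlock z d ≤ q := by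
  refine Multiset.le_iff_count.2 fun u => ?_
  by_cases hu : u = z
  · subst hu
    rw [count_doublingBlock_self hz0 hd.1.1, h3]
    omega
  by_cases hub : u ∈ doublingBlock z d
  · obtain ⟨i, hid, rfl⟩ := exists_of_mem_doublingBlock hd.1.1 hub
    have hi : 0 < i := Nat.pos_of_ne_zero fun h => hu (by simp [h])
    have huq : z * 2 ^ i ∈ q := by
      by_contra h
      exact (hd.2 ⟨hi, h⟩).not_gt hid
    exact (count_doublingBlock_le_one hz0 hu).trans (Multiset.one_le_count_iff_mem.2 huq)
  · simp [Multiset.count_eq_zero.2 hub]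

theorem count_sub_doublingBlock_self (hz0 : 0 < z) (h3 : q.count z = 3) (hd : 0 < d) :
    (q - doublingBlock z d).count z = 1 := by
  rw [Multiset.count_sub, h3, count_doublingBlock_self hz0 hd]

theorem nodup_cons_sub_doublingBlock (hz0 : 0 < z) (h3 : q.count z = 3)
    (h1 : ∀ u ≠ z, q.count u ≤ 1) (hd : IsLeast {e | 0 < e ∧ z * 2 ^ e ∉ q} d) :
    (z * 2 ^ d ::ₘ (q - doublingBlock z d)).Nodup := by
  refine Multiset.nodup_cons.2 ⟨fun h => hd.1.2 (Multiset.mem_of_le tsub_le_self h),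
    Multiset.nodup_iff_count_le_one.2 fun u => ?_⟩
  by_cases hu : u = z
  · rw [hu, count_sub_doublingBlock_self hz0 h3 hd.1.1]
  · rw [Multiset.count_sub]
    exact tsub_le_self.trans (h1 u hu)

theorem isLeast_mem_cons_sub_doublingBlock (hz0 : 0 < z) (h1 : ∀ u ≠ z, q.count u ≤ 1)
    (hd : IsLeast {e | 0 < e ∧ z * 2 ^ e ∉ q} d) :
    IsLeast {e | 0 < e ∧ z * 2 ^ e ∈ z * 2 ^ d ::ₘ (q - doublingBlock z d)} d := by
  refine ⟨⟨hd.1.1, Multiset.mem_cons_self _ _⟩, fun e ⟨he, hmem⟩ => le_of_not_gt fun hed => ?_⟩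
  have hne : z * 2 ^ e ≠ z * 2 ^ d := fun h => hed.ne (mul_two_pow_injective hz0 h)
  have hez : z * 2 ^ e ≠ z := fun h => he.ne' (mul_two_pow_injective hz0 (by simpa using h))
  rw [Multiset.mem_cons, or_iff_right hne, ← Multiset.count_pos, Multiset.count_sub] at hmem
  have := Multiset.one_le_count_iff_mem.2 (mul_two_pow_mem_doublingBlock (z := z) hed)
  have := h1 _ hez
  omega

end Merge

noncomputable def nextDoublingExp (s : Multiset ℕ) (z : ℕ) : ℕ :=
  sInf {d | 0 < d ∧ z * 2 ^ d ∈ s}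

noncomputable def firstMissingDoublingExp (s : Multiset ℕ) (z : ℕ) : ℕ :=
  sInf {d | 0 < d ∧ z * 2 ^ d ∉ s}

theorem isLeast_nextDoublingExp {s : Multiset ℕ} {z : ℕ} (h : ∃ d, 0 < d ∧ z * 2 ^ d ∈ s) :
    IsLeast {d | 0 < d ∧ z * 2 ^ d ∈ s} (nextDoublingExp s z) :=
  isLeast_csInf h

theorem isLeast_firstMissingDoublingExp (s : Multiset ℕ) {z : ℕ} (hz : 0 < z) :
    IsLeast {d | 0 < d ∧ z * 2 ^ d ∉ s} (firstMissingDoublingExp s z) := by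
  refine isLeast_csInf ⟨s.sum + 1, Nat.succ_pos _, fun h => ?_⟩
  have hle : z * 2 ^ (s.sum + 1) ≤ s.sum := Multiset.le_sum_of_mem h
  have := Nat.le_mul_of_pos_left (2 ^ (s.sum + 1)) hz
  have : s.sum + 1 < 2 ^ (s.sum + 1) := Nat.lt_two_pow_self
  omega

noncomputable def tripledPart (s : Multiset ℕ) : ℕ := sInf {x | s.count x = 3}

theorem tripledPart_eq {s : Multiset ℕ} {x : ℕ} (h3 : s.count x = 3)
    (h1 : ∀ y ≠ x, s.count y ≤ 1) : tripledPart s = x :=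
  IsLeast.csInf_eq ⟨h3, fun y hy => by
    by_contra hlt
    have := h1 y fun h => hlt (h ▸ le_rfl)
    simp_all⟩

theorem Multiset.exists_count_eq_three_iff {α : Type*} [DecidableEq α] (s : Multiset α) :
    (∃ x ∈ s, s.count x = 3 ∧ ∀ y ∈ s, y ≠ x → s.count y = 1) ↔
      ∃ x, s.count x = 3 ∧ ∀ y ≠ x, s.count y ≤ 1 := by
  constructor
  · rintro ⟨x, -, h3, h1⟩
    refine ⟨x, h3, fun y hy => ?_⟩
    by_cases hys : y ∈ s
    · exact (h1 y hys hy).le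
    · simp [Multiset.count_eq_zero.2 hys]
  · rintro ⟨x, h3, h1⟩
    refine ⟨x, Multiset.count_pos.1 (by omega), h3, fun y hys hy => ?_⟩
    exact le_antisymm (h1 y hy) (Multiset.one_le_count_iff_mem.2 hys)

namespace Nat.Partition

variable {n : ℕ}

def exchange (p : n.Partition) (a b : Multiset ℕ) (ha : a ≤ p.parts) (hb : ∀ i ∈ b, 0 < i)
    (hab : b.sum = a.sum) : n.Partition where
  parts := b + (p.parts - a)
  parts_pos hi :=
    (Multiset.mem_add.1 hi).elim (hb _) fun h => p.parts_pos (Multiset.mem_of_le tsub_le_self h)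
  parts_sum := by
    rw [Multiset.sum_add, hab, ← Multiset.sum_add, add_tsub_cancel_of_le ha, p.parts_sum]

def splitDoubling (p : n.Partition) (z d : ℕ) (h : z * 2 ^ d ∈ p.parts) : n.Partition :=
  p.exchange {z * 2 ^ d} (doublingBlock z d) (Multiset.singleton_le.2 h)
    (fun _ => pos_of_mem_doublingBlock (Nat.pos_of_mul_pos_right (p.parts_pos h)))
    (by rw [sum_doublingBlock, Multiset.sum_singleton])

def mergeDoubling (q : n.Partition) (z d : ℕ) (h : doublingBlock z d ≤ q.parts) : n.Partition :=
  q.exchange (doublingBlock z d) {z * 2 ^ d} h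
    (by simpa using q.parts_pos (Multiset.mem_of_le h (Multiset.mem_cons_self z _)))
    (by rw [sum_doublingBlock, Multiset.sum_singleton])

theorem splitDoubling_parts (p : n.Partition) (z d : ℕ) (h : z * 2 ^ d ∈ p.parts) :
    (p.splitDoubling z d h).parts = doublingBlock z d + p.parts.erase (z * 2 ^ d) := by
  simp [splitDoubling, exchange]

theorem mergeDoubling_parts (q : n.Partition) (z d : ℕ) (h : doublingBlock z d ≤ q.parts) :
    (q.mergeDoubling z d h).parts = z * 2 ^ d ::ₘ (q.parts - doublingBlock z d) := by
  simp [mergeDoubling, exchange, Multiset.singleton_add]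

theorem mergeDoubling_splitDoubling (p : n.Partition) {z d z' d' : ℕ}
    (h : z * 2 ^ d ∈ p.parts) (hz : z' = z) (hd : d' = d)
    (h' : doublingBlock z' d' ≤ (p.splitDoubling z d h).parts) :
    (p.splitDoubling z d h).mergeDoubling z' d' h' = p := by
  subst hz hd
  ext1
  rw [mergeDoubling_parts, splitDoubling_parts, add_tsub_cancel_left, Multiset.cons_erase h]

theorem splitDoubling_mergeDoubling (q : n.Partition) {z d d' : ℕ}
    (h : doublingBlock z d ≤ q.parts) (hd : d' = d)
    (h' : z * 2 ^ d' ∈ (q.mergeDoubling z d h).parts) :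
    (q.mergeDoubling z d h).splitDoubling z d' h' = q := by
  subst hd
  ext1
  rw [splitDoubling_parts, mergeDoubling_parts, Multiset.erase_cons_head,
    add_tsub_cancel_of_le h]

theorem splitDoubling_spec {p : n.Partition} {z d : ℕ} (hp : p.parts.Nodup) (hz : z ∈ p.parts)
    (hd : IsLeast {e | 0 < e ∧ z * 2 ^ e ∈ p.parts} d) :
    (p.splitDoubling z d hd.1.2).parts.count z = 3 ∧
      (∀ u ≠ z, (p.splitDoubling z d hd.1.2).parts.count u ≤ 1) ∧
      IsLeast {e | 0 < e ∧ z * 2 ^ e ∉ (p.splitDoubling z d hd.1.2).parts} d := by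
  rw [splitDoubling_parts]
  exact ⟨count_doublingBlock_add_erase_self (p.parts_pos hz) hp hz hd,
    fun u => count_doublingBlock_add_erase_le_one (p.parts_pos hz) hp hd,
    isLeast_notMem_doublingBlock_add_erase (p.parts_pos hz) hp hd⟩

theorem mergeDoubling_spec {q : n.Partition} {z d : ℕ} (h3 : q.parts.count z = 3)
    (h1 : ∀ u ≠ z, q.parts.count u ≤ 1) (hd : IsLeast {e | 0 < e ∧ z * 2 ^ e ∉ q.parts} d)
    (h : doublingBlock z d ≤ q.parts) :
    (q.mergeDoubling z d h).parts.Nodup ∧ z ∈ (q.mergeDoubling z d h).parts ∧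
      IsLeast {e | 0 < e ∧ z * 2 ^ e ∈ (q.mergeDoubling z d h).parts} d := by
  have hz0 : 0 < z := q.parts_pos (Multiset.count_pos.1 (by omega))
  rw [mergeDoubling_parts]
  refine ⟨nodup_cons_sub_doublingBlock hz0 h3 h1 hd, Multiset.mem_cons_of_mem ?_,
    isLeast_mem_cons_sub_doublingBlock hz0 h1 hd⟩
  exact Multiset.count_pos.1 (by rw [count_sub_doublingBlock_self hz0 h3 hd.1.1]; exact one_pos)

end Nat.Partition

open Classical in
/-- The pairs `(λ, z)` with `λ` into distinct parts and `z` a part of `λ` that is not the largest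
part of its chain `{x, 2x, 4x, …}`. -/
noncomputable def nonmaxChainParts (n : ℕ) : Finset ((_ : n.Partition) × ℕ) :=
  (Nat.Partition.distincts n).sigma fun p =>
    p.parts.toFinset.filter fun z => ∃ d, 0 < d ∧ z * 2 ^ d ∈ p.parts

theorem mem_nonmaxChainParts {n : ℕ} {a : (_ : n.Partition) × ℕ} :
    a ∈ nonmaxChainParts n ↔
      a.1.parts.Nodup ∧ a.2 ∈ a.1.parts ∧ ∃ d, 0 < d ∧ a.2 * 2 ^ d ∈ a.1.parts := by
  simp [nonmaxChainParts, Nat.Partition.distincts]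

open Nat.Partition in
open Classical in
theorem card_nonmaxChainParts (n : ℕ) :
    #(nonmaxChainParts n) = #(univ.filter fun p : n.Partition =>
      ∃ x ∈ p.parts, p.parts.count x = 3 ∧ ∀ y ∈ p.parts, y ≠ x → p.parts.count y = 1) := by
  simp only [Multiset.exists_count_eq_three_iff]
  have tripled {q : n.Partition} (hq : q ∈ univ.filter fun p : n.Partition =>
      ∃ x, p.parts.count x = 3 ∧ ∀ y ≠ x, p.parts.count y ≤ 1) :
      0 < tripledPart q.parts ∧ q.parts.count (tripledPart q.parts) = 3 ∧
        ∀ y ≠ tripledPart q.parts, q.parts.count y ≤ 1 := by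
    obtain ⟨x, h3, h1⟩ := (mem_filter.1 hq).2
    rw [tripledPart_eq h3 h1]
    exact ⟨q.parts_pos (Multiset.count_pos.1 (by omega)), h3, h1⟩
  refine card_bij'
    (fun a ha => a.1.splitDoubling a.2 (nextDoublingExp a.1.parts a.2)
      (isLeast_nextDoublingExp (mem_nonmaxChainParts.1 ha).2.2).1.2)
    (fun q hq => ⟨q.mergeDoubling (tripledPart q.parts)
        (firstMissingDoublingExp q.parts (tripledPart q.parts))
        (doublingBlock_le (tripled hq).1 (tripled hq).2.1
          (isLeast_firstMissingDoublingExp _ (tripled hq).1)),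
      tripledPart q.parts⟩) ?_ ?_ ?_ ?_
  · rintro ⟨p, z⟩ ha
    obtain ⟨hp, hz, hd⟩ := mem_nonmaxChainParts.1 ha
    obtain ⟨h3, h1, -⟩ := splitDoubling_spec hp hz (isLeast_nextDoublingExp hd)
    exact mem_filter.2 ⟨mem_univ _, z, h3, h1⟩
  · intro q hq
    obtain ⟨hz0, h3, h1⟩ := tripled hq
    have hmiss := isLeast_firstMissingDoublingExp q.parts hz0
    obtain ⟨hnodup, hz, hd⟩ := mergeDoubling_spec h3 h1 hmiss (doublingBlock_le hz0 h3 hmiss)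
    exact mem_nonmaxChainParts.2 ⟨hnodup, hz, _, hd.1⟩
  · rintro ⟨p, z⟩ ha
    obtain ⟨hp, hz, hd⟩ := mem_nonmaxChainParts.1 ha
    obtain ⟨h3, h1, hmiss⟩ := splitDoubling_spec hp hz (isLeast_nextDoublingExp hd)
    have hz' := tripledPart_eq h3 h1
    refine Sigma.ext (mergeDoubling_splitDoubling p _ hz' (by rw [hz']; exact hmiss.csInf_eq) ?_)
      (heq_of_eq hz')
    rw [hz']
    exact doublingBlock_le (p.parts_pos hz) h3 (isLeast_firstMissingDoublingExp _ (p.parts_pos hz))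
  · intro q hq
    obtain ⟨hz0, h3, h1⟩ := tripled hq
    have hmiss := isLeast_firstMissingDoublingExp q.parts hz0
    obtain ⟨-, -, hd⟩ := mergeDoubling_spec h3 h1 hmiss (doublingBlock_le hz0 h3 hmiss)
    exact splitDoubling_mergeDoubling q (doublingBlock_le hz0 h3 hmiss) hd.csInf_eq _

open scoped Classical in
theorem chain_excess_sum_eq_one_part_thrice_general (n : ℕ) :
    (∑ p ∈ Nat.Partition.distincts n,
        ∑ x ∈ (Finset.range (n + 1)).filter (fun x => Odd x),
          (Multiset.card (p.parts.filter fun y => ∃ j : ℕ, y = x * 2 ^ j) - 1)) =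
      (Finset.univ.filter fun p : n.Partition =>
        ∃ x ∈ p.parts, p.parts.count x = 3 ∧
          ∀ y ∈ p.parts, y ≠ x → p.parts.count y = 1).card := by
  rw [← card_nonmaxChainParts, nonmaxChainParts, card_sigma]
  exact sum_congr rfl fun p hp =>
    p.sum_card_chain_sub_one_eq_card_filter (mem_filter.1 hp).2

open scoped Classical in
theorem chain_excess_sum_eq_one_part_thrice (n : ℕ) (hn : 0 < n) :
    (∑ p ∈ Nat.Partition.distincts n,
        ∑ x ∈ (Finset.range (n + 1)).filter (fun x => Odd x),
          (Multiset.card (p.parts.filter fun y => ∃ j : ℕ, y = x * 2 ^ j) - 1)) =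
      (Finset.univ.filter fun p : n.Partition =>
        ∃ x ∈ p.parts, p.parts.count x = 3 ∧
          ∀ y ∈ p.parts, y ≠ x → p.parts.count y = 1).card :=
  chain_excess_sum_eq_one_part_thrice_general n
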